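/- arXiv:2208.12427 — 7 statements merged into one kernel-verified Lean document; each statement's English description precedes it below -/
import Mathlib

section
/- Let S, T be positive self-adjoint bounded operators on a Hilbert space with ‖S‖ ≤ κ², ‖T‖ ≤ κ², and λ > 0. Then ‖T(λI + ST)⁻¹S‖ ≤ 2κ⁴/λ. -/
local notation "⟪" x ", " y "⟫" => @inner ℝ _ _ x y

/-- Cauchy–Schwarz for the bilinear form of a positive operator (real case). -/
lemma pos_op_cauchy_schwarz {E : Type*} [NormedAddCommGroup E] [InnerProductSpace ℝ E]
    [CompleteSpace E] {P : E →L[ℝ] E} (hP : P.IsPositive) (x y : E) :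
    ⟪P x, y⟫ ^ 2 ≤ ⟪P x, x⟫ * ⟪P y, y⟫ := by
  have hsymm := hP.1
  have hpos : ∀ z, 0 ≤ ⟪P z, z⟫ := by
    intro z
    simpa [ContinuousLinearMap.reApplyInnerSelf] using hP.2 z
  have h : ∀ t : ℝ, 0 ≤ ⟪P y, y⟫ * (t * t) + (2 * ⟪P x, y⟫) * t + ⟪P x, x⟫ := by
    intro t
    have h1 := hpos (x + t • y)
    have hyx : ⟪P y, x⟫ = ⟪P x, y⟫ := by
      simpa [real_inner_comm] using hsymm y x
    simp only [map_add, map_smul, inner_add_left, inner_add_right, real_inner_smul_left,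
      real_inner_smul_right] at h1
    rw [hyx] at h1; nlinarith [h1]
  have hd := discrim_le_zero h
  simp only [discrim] at hd
  nlinarith [hd]

/-- `P² ≤ c·P` pointwise, for a positive operator with `‖P‖ ≤ c`. -/
lemma pos_op_sq_le {E : Type*} [NormedAddCommGroup E] [InnerProductSpace ℝ E]
    [CompleteSpace E] {P : E →L[ℝ] E} (hP : P.IsPositive) {c : ℝ} (hc : ‖P‖ ≤ c) (z : E) :
    ‖P z‖ ^ 2 ≤ c * ⟪P z, z⟫ := by
  have hcs := pos_op_cauchy_schwarz hP z (P z)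
  have hB : (0:ℝ) ≤ ⟪P z, z⟫ := by
    simpa [ContinuousLinearMap.reApplyInnerSelf] using hP.2 z
  have hself : ⟪P z, P z⟫ = ‖P z‖ ^ 2 := real_inner_self_eq_norm_sq (P z)
  have hbound : ⟪P (P z), P z⟫ ≤ c * ‖P z‖ ^ 2 := by
    have h1 : ⟪P (P z), P z⟫ ≤ ‖P (P z)‖ * ‖P z‖ := real_inner_le_norm _ _
    have h2 : ‖P (P z)‖ ≤ ‖P‖ * ‖P z‖ := P.le_opNorm _
    have h3 : (0:ℝ) ≤ ‖P z‖ := norm_nonneg _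
    nlinarith
  have hc0 : (0:ℝ) ≤ c := le_trans (norm_nonneg _) hc
  rcases eq_or_lt_of_le (norm_nonneg (P z)) with h0 | h0
  · nlinarith [mul_nonneg hc0 hB, h0]
  · have h4 : ‖P z‖ ^ 2 * ‖P z‖ ^ 2 ≤ (c * ⟪P z, z⟫) * ‖P z‖ ^ 2 := by
      nlinarith [hcs, hself, hbound, hB]
    have h5 : (0:ℝ) < ‖P z‖ ^ 2 := by positivity
    nlinarith [h4, h5]

/-- For positive (self-adjoint) bounded operators `S`, `T` on a Hilbert space with
`‖S‖ ≤ κ²`, `‖T‖ ≤ κ²` and `λ > 0`, one has `‖T (λI + S T)⁻¹ S‖ ≤ 2κ⁴/λ`. -/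
theorem norm_T_inv_S_le
    {E : Type*} [NormedAddCommGroup E] [InnerProductSpace ℝ E] [CompleteSpace E]
    (S T : E →L[ℝ] E) (hS : S.IsPositive) (hT : T.IsPositive)
    (κ : ℝ) (hκ : 1 ≤ κ) (hSκ : ‖S‖ ≤ κ ^ 2) (hTκ : ‖T‖ ≤ κ ^ 2)
    (lam : ℝ) (hlam : 0 < lam)
    [Invertible (lam • (1 : E →L[ℝ] E) + S * T)] :
    ‖T * ⅟(lam • (1 : E →L[ℝ] E) + S * T) * S‖ ≤ 2 * κ ^ 4 / lam := by
  set R : E →L[ℝ] E := ⅟(lam • (1 : E →L[ℝ] E) + S * T) with hR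
  set X : E →L[ℝ] E := T * R * S with hX
  have hκ0 : (0:ℝ) < κ := lt_of_lt_of_le one_pos hκ
  -- the key algebraic identity
  have hswap : (lam • (1 : E →L[ℝ] E) + T * S) * T
      = T * (lam • (1 : E →L[ℝ] E) + S * T) := by
    ext w
    simp [ContinuousLinearMap.mul_apply, ContinuousLinearMap.add_apply,
      ContinuousLinearMap.smul_apply, map_add, map_smul]
  have hid : (lam • (1 : E →L[ℝ] E) + T * S) * X = T * S := by
    calc (lam • (1 : E →L[ℝ] E) + T * S) * X
        = ((lam • (1 : E →L[ℝ] E) + T * S) * T) * (R * S) := by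
          rw [hX, mul_assoc, mul_assoc]
      _ = T * ((lam • (1 : E →L[ℝ] E) + S * T) * R) * S := by
          rw [hswap, mul_assoc, ← mul_assoc (lam • (1 : E →L[ℝ] E) + S * T) R S, ← mul_assoc]
      _ = T * S := by rw [hR, mul_invOf_self, mul_one]
  refine ContinuousLinearMap.opNorm_le_bound _ (by positivity) ?_
  intro u
  set x : E := X u with hx
  -- pointwise form of the identity
  have hidu : lam • x + T (S x) = T (S u) := by
    have := congrArg (fun f : E →L[ℝ] E => f u) hid
    simpa [ContinuousLinearMap.mul_apply, ContinuousLinearMap.add_apply,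
      ContinuousLinearMap.smul_apply, hx] using this
  set v : E := (1 / lam) • (u - x) with hv
  have hlam' : lam ≠ 0 := ne_of_gt hlam
  have hTSv : T (S v) = x := by
    rw [hv]
    have : T (S ((1 / lam) • (u - x))) = (1 / lam) • (T (S u) - T (S x)) := by
      simp [map_sub, map_smul]
    rw [this, ← hidu]
    simp [smul_smul, hlam']
  have hu : lam • v + x = u := by
    rw [hv, smul_smul]
    field_simp
    simp
  set a : E := S v with ha
  -- pairing the equation with a
  have h1 : lam * ⟪v, a⟫ + ⟪T a, a⟫ = ⟪u, a⟫ := by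
    have := congrArg (fun w : E => ⟪w, a⟫) hu
    simpa [inner_add_left, real_inner_smul_left, ← hTSv, ha] using this
  have hTa : (0:ℝ) ≤ ⟪T a, a⟫ := by
    simpa [ContinuousLinearMap.reApplyInnerSelf] using hT.2 a
  have hva : lam * ⟪v, a⟫ ≤ ‖u‖ * ‖a‖ := by
    have := real_inner_le_norm u a
    linarith
  have hSa : ‖a‖ ^ 2 ≤ κ ^ 2 * ⟪a, v⟫ := by
    have := pos_op_sq_le hS hSκ v
    simpa [ha] using this
  have hcomm : ⟪a, v⟫ = ⟪v, a⟫ := real_inner_comm _ _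
  -- ‖a‖ ≤ κ²‖u‖/lam
  have hna : lam * ‖a‖ ≤ κ ^ 2 * ‖u‖ := by
    have hkey : lam * ‖a‖ ^ 2 ≤ κ ^ 2 * (‖u‖ * ‖a‖) := by
      calc lam * ‖a‖ ^ 2 ≤ lam * (κ ^ 2 * ⟪v, a⟫) := by
            rw [← hcomm]
            exact mul_le_mul_of_nonneg_left hSa (le_of_lt hlam)
        _ = κ ^ 2 * (lam * ⟪v, a⟫) := by ring
        _ ≤ κ ^ 2 * (‖u‖ * ‖a‖) := by
            exact mul_le_mul_of_nonneg_left hva (by positivity)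
    rcases eq_or_lt_of_le (norm_nonneg a) with h0 | h0
    · rw [← h0, mul_zero]
      positivity
    · nlinarith [hkey, h0]
  -- conclude
  have hxa : ‖x‖ ≤ ‖T‖ * ‖a‖ := by rw [← hTSv]; exact T.le_opNorm _
  have hfinal : ‖x‖ ≤ κ ^ 4 / lam * ‖u‖ := by
    have h2 : ‖x‖ ≤ κ ^ 2 * ‖a‖ :=
      le_trans hxa (mul_le_mul_of_nonneg_right hTκ (norm_nonneg _))
    have h3 : ‖a‖ ≤ κ ^ 2 * ‖u‖ / lam := by
      rw [le_div_iff₀ hlam]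
      linarith [hna]
    calc ‖x‖ ≤ κ ^ 2 * (κ ^ 2 * ‖u‖ / lam) := le_trans h2 (mul_le_mul_of_nonneg_left h3 (by positivity))
      _ = κ ^ 4 / lam * ‖u‖ := by ring
  have hend : ‖x‖ ≤ 2 * κ ^ 4 / lam * ‖u‖ := by
    calc ‖x‖ ≤ κ ^ 4 / lam * ‖u‖ := hfinal
    _ ≤ 2 * κ ^ 4 / lam * ‖u‖ := by
        have : κ ^ 4 / lam ≤ 2 * κ ^ 4 / lam := by
          gcongr
          nlinarith [pow_pos hκ0 4]
        exact mul_le_mul_of_nonneg_right this (norm_nonneg _)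
  rw [hx, hX, hR] at hend
  exact hend
end

section
/- Let S, T be positive self-adjoint bounded operators on a Hilbert space with ‖T‖ ≤ κ² and λ > 0. Then ‖T(λI + ST)⁻¹‖ ≤ 2κ²/λ. -/
open scoped RealInnerProductSpace

private lemma pos_cs {E : Type*} [NormedAddCommGroup E] [InnerProductSpace ℝ E]
    [CompleteSpace E] (T : E →L[ℝ] E) (hT : T.IsPositive) (u v : E) :
    ⟪T u, v⟫ ^ 2 ≤ ⟪T u, u⟫ * ⟪T v, v⟫ := by
  have hsymm := hT.1
  have h : ∀ t : ℝ, 0 ≤ ⟪T v, v⟫ * (t * t) + (2 * ⟪T u, v⟫) * t + ⟪T u, u⟫ := by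
    intro t
    have h0 := hT.inner_nonneg_left (u + t • v)
    have hvu : ⟪T v, u⟫ = ⟪T u, v⟫ := (hsymm v u).trans (real_inner_comm _ _)
    calc (0:ℝ) ≤ ⟪T (u + t • v), u + t • v⟫ := h0
    _ = ⟪T v, v⟫ * (t * t) + (2 * ⟪T u, v⟫) * t + ⟪T u, u⟫ := by
        simp only [map_add, map_smul, inner_add_left, inner_add_right,
          inner_smul_left, inner_smul_right, RCLike.conj_to_real, hvu,
          ContinuousLinearMap.coe_smul', Pi.smul_apply, smul_eq_mul]
        ring
  have hd := discrim_le_zero h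
  rw [discrim] at hd
  nlinarith [hd]

/-- For positive (self-adjoint) bounded operators `S`, `T` on a Hilbert space with
`‖T‖ ≤ κ²` and `λ > 0`, one has `‖T (λI + S T)⁻¹‖ ≤ 2κ²/λ`. -/
theorem norm_T_inv_le
    {E : Type*} [NormedAddCommGroup E] [InnerProductSpace ℝ E] [CompleteSpace E]
    (S T : E →L[ℝ] E) (hS : S.IsPositive) (hT : T.IsPositive)
    (κ : ℝ) (hκ : 1 ≤ κ) (hTκ : ‖T‖ ≤ κ ^ 2)
    (lam : ℝ) (hlam : 0 < lam)
    [Invertible (lam • (1 : E →L[ℝ] E) + S * T)] :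
    ‖T * ⅟(lam • (1 : E →L[ℝ] E) + S * T)‖ ≤ 2 * κ ^ 2 / lam := by
  have hκ2 : (0:ℝ) < κ ^ 2 := by positivity
  have hC : 0 ≤ 2 * κ ^ 2 / lam := by positivity
  apply ContinuousLinearMap.opNorm_le_bound _ hC
  intro x
  set y : E := (⅟(lam • (1 : E →L[ℝ] E) + S * T)) x with hy
  have hAy : (lam • (1 : E →L[ℝ] E) + S * T) y = x := by
    rw [hy, ← ContinuousLinearMap.comp_apply, ← ContinuousLinearMap.mul_def, mul_invOf_self,
      ContinuousLinearMap.one_apply]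
  have hxe : lam • y + S (T y) = x := by
    rw [← hAy]; simp [ContinuousLinearMap.mul_apply]
  show ‖T y‖ ≤ 2 * κ ^ 2 / lam * ‖x‖
  have hS0 : (0:ℝ) ≤ ⟪S (T y), T y⟫ := by
    have := hS.inner_nonneg_left (T y); simpa using this
  have hTy0 : (0:ℝ) ≤ ⟪T y, y⟫ := by
    have := hT.inner_nonneg_left y; simpa using this
  have h1 : lam * ⟪T y, y⟫ ≤ ‖x‖ * ‖T y‖ := by
    have hx : ⟪x, T y⟫ = lam * ⟪y, T y⟫ + ⟪S (T y), T y⟫ := by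
      rw [← hxe]; simp [inner_add_left, inner_smul_left]
    have h2 : ⟪x, T y⟫ ≤ ‖x‖ * ‖T y‖ := real_inner_le_norm x (T y)
    have h3 : ⟪T y, y⟫ = ⟪y, T y⟫ := real_inner_comm _ _
    nlinarith [hlam]
  have hcs := pos_cs T hT y (T y)
  have hTTy : ⟪T (T y), T y⟫ ≤ ‖T‖ * ‖T y‖ ^ 2 := by
    calc ⟪T (T y), T y⟫ ≤ ‖T (T y)‖ * ‖T y‖ := real_inner_le_norm _ _
    _ ≤ (‖T‖ * ‖T y‖) * ‖T y‖ := by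
        have := T.le_opNorm (T y)
        have h0 : (0:ℝ) ≤ ‖T y‖ := norm_nonneg _
        nlinarith
    _ = ‖T‖ * ‖T y‖ ^ 2 := by ring
  have hnorm4 : ‖T y‖ ^ 4 ≤ ⟪T y, y⟫ * (‖T‖ * ‖T y‖ ^ 2) := by
    have hTyTy : ⟪T y, T y⟫ = ‖T y‖ ^ 2 := real_inner_self_eq_norm_sq _
    nlinarith [hcs, hTTy, hTy0]
  rcases eq_or_lt_of_le (norm_nonneg (T y)) with h0 | h0
  · rw [← h0]; positivity
  · have key : ‖T y‖ * lam ≤ ‖T‖ * ‖x‖ := by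
      nlinarith [mul_le_mul_of_nonneg_left hnorm4 hlam.le,
        mul_le_mul_of_nonneg_left h1 (mul_nonneg T.opNorm_nonneg (sq_nonneg ‖T y‖)),
        pow_pos h0 3]
    rw [div_mul_eq_mul_div, le_div_iff₀ hlam]
    have hTx : ‖T‖ * ‖x‖ ≤ κ ^ 2 * ‖x‖ :=
      mul_le_mul_of_nonneg_right hTκ (norm_nonneg x)
    nlinarith [norm_nonneg x]
end

section
/- Let T be a positive self-adjoint bounded operator on a Hilbert space and λ > 0. Then ‖(√λ I + T)^{1/2}(λI + T²)⁻¹ T‖ ≤ 2λ^{−1/4}. -/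
set_option maxHeartbeats 1000000

open scoped RealInnerProductSpace

/-- For a positive (self-adjoint) bounded operator `T` on a Hilbert space and `λ > 0`,
if `R` is the positive square root of `√λ I + T` then
`‖R (λI + T²)⁻¹ T‖ ≤ 2 λ^(-1/4)`. -/
theorem norm_sqrt_inv_T_le
    {E : Type*} [NormedAddCommGroup E] [InnerProductSpace ℝ E] [CompleteSpace E]
    (T : E →L[ℝ] E) (hT : T.IsPositive) (lam : ℝ) (hlam : 0 < lam)
    (R : E →L[ℝ] E) (hR : R.IsPositive)
    (hRsq : R * R = Real.sqrt lam • (1 : E →L[ℝ] E) + T)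
    [Invertible (lam • (1 : E →L[ℝ] E) + T * T)] :
    ‖R * ⅟(lam • (1 : E →L[ℝ] E) + T * T) * T‖ ≤ 2 * lam ^ (-(1 : ℝ)/4) := by
  suffices hmain : ∀ A : E →L[ℝ] E, (lam • (1 : E →L[ℝ] E) + T * T) * A = 1 →
      A * (lam • (1 : E →L[ℝ] E) + T * T) = 1 →
      ‖R * A * T‖ ≤ 2 * lam ^ (-(1 : ℝ)/4) by
    exact hmain _ (mul_invOf_self _) (invOf_mul_self _)
  intro A hSA0 hAS0
  set S : E →L[ℝ] E := lam • (1 : E →L[ℝ] E) + T * T with hS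
  have hSA : S * A = 1 := hSA0
  have hAS : A * S = 1 := hAS0
  have hsl : 0 < Real.sqrt lam := Real.sqrt_pos.mpr hlam
  -- symmetry of T
  have hTsym : ∀ x y : E, ⟪T x, y⟫ = ⟪x, T y⟫ :=
    fun x y => (ContinuousLinearMap.isSelfAdjoint_iff_isSymmetric.mp hT.isSelfAdjoint) x y
  -- T commutes with S, hence with A
  have hTS : T * S = S * T := by
    simp [hS, mul_add, add_mul, mul_smul_comm, smul_mul_assoc, mul_assoc]
  have hTA : T * A = A * T := by
    have : A * (T * S) * A = A * (S * T) * A := by rw [hTS]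
    calc T * A = A * S * (T * A) := by rw [hAS, one_mul]
    _ = A * (S * T) * A := by simp [mul_assoc]
    _ = A * (T * S) * A := by rw [hTS]
    _ = A * T * (S * A) := by simp [mul_assoc]
    _ = A * T := by rw [hSA, mul_one]
  have hTAapp : ∀ x : E, T (A x) = A (T x) := by
    intro x
    have := congrArg (fun f : E →L[ℝ] E => f x) hTA
    simpa using this
  have hSAapp : ∀ x : E, S (A x) = x := by
    intro x
    have := congrArg (fun f : E →L[ℝ] E => f x) hSA
    simpa using this
  -- symmetry of A
  have hSsa : IsSelfAdjoint S := by
    simp only [IsSelfAdjoint, hS, star_add, star_smul, star_trivial, star_one, star_mul,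
      hT.isSelfAdjoint.star_eq]
  have hAsa : IsSelfAdjoint A := by
    have h1 : star A * S = 1 := by
      calc star A * S = star A * star S := by rw [hSsa.star_eq]
      _ = star (S * A) := (star_mul S A).symm
      _ = 1 := by rw [hSA, star_one]
    exact left_inv_eq_right_inv h1 hSA
  have hAsym : ∀ x y : E, ⟪A x, y⟫ = ⟪x, A y⟫ :=
    fun x y => (ContinuousLinearMap.isSelfAdjoint_iff_isSymmetric.mp hAsa) x y
  -- inner product with S
  have hSinner : ∀ z : E, ⟪S z, z⟫ = lam * ‖z‖ ^ 2 + ‖T z‖ ^ 2 := by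
    intro z
    simp only [hS, ContinuousLinearMap.add_apply, ContinuousLinearMap.smul_apply,
      ContinuousLinearMap.one_apply, ContinuousLinearMap.mul_apply]
    rw [inner_add_left, real_inner_smul_left, real_inner_self_eq_norm_sq, hTsym,
      real_inner_self_eq_norm_sq]
  -- basic bound on A
  have hAbound : ∀ z : E, lam * ‖A z‖ ^ 2 ≤ ⟪z, A z⟫ := by
    intro z
    have h1 : ⟪S (A z), A z⟫ = ⟪z, A z⟫ := by rw [hSAapp]
    have h2 := hSinner (A z)
    nlinarith [sq_nonneg ‖T (A z)‖]
  have hAz_le : ∀ z : E, ⟪z, A z⟫ ≤ ‖z‖ ^ 2 / lam := by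
    intro z
    have h1 := hAbound z
    have h2 : ⟪z, A z⟫ ≤ ‖z‖ * ‖A z‖ := real_inner_le_norm z (A z)
    have h3 : 0 ≤ ‖A z‖ := norm_nonneg _
    have h4 : 0 ≤ ‖z‖ := norm_nonneg _
    rw [le_div_iff₀ hlam]
    nlinarith [sq_nonneg (‖z‖ - lam * ‖A z‖), mul_le_mul_of_nonneg_left h2 hlam.le,
      mul_le_mul_of_nonneg_left h1 hlam.le]
  have hAnn : ∀ z : E, 0 ≤ ⟪z, A z⟫ := by
    intro z
    have := hAbound z
    nlinarith [sq_nonneg ‖A z‖]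
  -- the main pointwise estimate
  have key : ∀ x : E, ‖(R * A * T) x‖ ^ 2 ≤ (4 / Real.sqrt lam) * ‖x‖ ^ 2 := by
    intro x
    set y : E := A (T x) with hy
    have happ : (R * A * T) x = R y := rfl
    -- ‖R y‖² = √λ ‖y‖² + ⟪T y, y⟫
    have hRsym : ∀ a b : E, ⟪R a, b⟫ = ⟪a, R b⟫ :=
      fun a b => (ContinuousLinearMap.isSelfAdjoint_iff_isSymmetric.mp hR.isSelfAdjoint) a b
    have hRy : ‖R y‖ ^ 2 = Real.sqrt lam * ‖y‖ ^ 2 + ⟪T y, y⟫ := by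
      have h1 : ‖R y‖ ^ 2 = ⟪(R * R) y, y⟫ := by
        rw [ContinuousLinearMap.mul_apply, hRsym (R y) y, real_inner_self_eq_norm_sq]
      rw [h1, hRsq]
      simp only [ContinuousLinearMap.add_apply, ContinuousLinearMap.smul_apply,
        ContinuousLinearMap.one_apply]
      rw [inner_add_left, real_inner_smul_left, real_inner_self_eq_norm_sq]
    -- bound on ‖y‖²
    have hy1 : ‖y‖ ^ 2 ≤ ‖x‖ ^ 2 / lam := by
      have h1 : y = T (A x) := by rw [hy, hTAapp]
      have h2 : ⟪S (A x), A x⟫ = ⟪x, A x⟫ := by rw [hSAapp]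
      have h3 := hSinner (A x)
      have h4 := hAz_le x
      have h5 : 0 ≤ lam * ‖A x‖ ^ 2 := by positivity
      rw [h1]
      nlinarith
    -- bound on ⟪T y, y⟫
    have hy2 : ⟪T y, y⟫ ≤ ‖x‖ ^ 2 / (2 * Real.sqrt lam) := by
      -- 2√λ ⟪T y, y⟫ ≤ ⟪S y, y⟫
      have h1 : 2 * Real.sqrt lam * ⟪T y, y⟫ ≤ ⟪S y, y⟫ := by
        have hsq : 0 ≤ ‖Real.sqrt lam • y - T y‖ ^ 2 := sq_nonneg _
        have hexp : ‖Real.sqrt lam • y - T y‖ ^ 2 =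
            lam * ‖y‖ ^ 2 - 2 * Real.sqrt lam * ⟪T y, y⟫ + ‖T y‖ ^ 2 := by
          rw [norm_sub_sq_real, norm_smul, real_inner_smul_left]
          have : ⟪y, T y⟫ = ⟪T y, y⟫ := real_inner_comm _ _
          rw [this]
          have hnn : ‖Real.sqrt lam‖ = Real.sqrt lam := Real.norm_of_nonneg hsl.le
          rw [hnn, mul_pow, Real.sq_sqrt hlam.le]
          ring
        rw [hSinner y]
        nlinarith
      -- ⟪S y, y⟫ = ⟪T x, y⟫ ≤ ‖x‖²
      have h2 : ⟪S y, y⟫ ≤ ‖x‖ ^ 2 := by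
        have h3 : S y = T x := hSAapp (T x)
        have h4 : ⟪T x, A (T x)⟫ = ⟪x, T (A (T x))⟫ := hTsym x (A (T x))
        have h5 : T (A (T x)) = A (T (T x)) := hTAapp (T x)
        have h6 : A (T (T x)) = x - lam • A x := by
          have : A * (T * T) = 1 - lam • A := by
            have : A * S = 1 := hAS
            rw [hS] at this
            calc A * (T * T) = A * (lam • 1 + T * T) - lam • A := by
                  rw [mul_add, mul_smul_comm, mul_one]; abel
            _ = 1 - lam • A := by rw [this]
          have happ2 := congrArg (fun f : E →L[ℝ] E => f x) this
          simpa using happ2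
        have h7 : ⟪x, x - lam • A x⟫ = ‖x‖ ^ 2 - lam * ⟪x, A x⟫ := by
          rw [inner_sub_right, real_inner_smul_right, real_inner_self_eq_norm_sq]
        have h8 : 0 ≤ ⟪x, A x⟫ := hAnn x
        calc ⟪S y, y⟫ = ⟪T x, A (T x)⟫ := by rw [h3, hy]
        _ = ⟪x, T (A (T x))⟫ := h4
        _ = ⟪x, x - lam • A x⟫ := by rw [h5, h6]
        _ = ‖x‖ ^ 2 - lam * ⟪x, A x⟫ := h7
        _ ≤ ‖x‖ ^ 2 := by nlinarith
      rw [le_div_iff₀ (by positivity)]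
      nlinarith
    rw [happ, hRy]
    have h9 : Real.sqrt lam * ‖y‖ ^ 2 ≤ ‖x‖ ^ 2 / Real.sqrt lam := by
      have h := mul_le_mul_of_nonneg_left hy1 hsl.le
      have heq : Real.sqrt lam * (‖x‖ ^ 2 / lam) = ‖x‖ ^ 2 / Real.sqrt lam := by
        have hm : Real.sqrt lam * Real.sqrt lam = lam := Real.mul_self_sqrt hlam.le
        field_simp
        linear_combination ‖x‖ ^ 2 * hm
      linarith [heq ▸ h]
    have h10 : ‖x‖ ^ 2 / Real.sqrt lam + ‖x‖ ^ 2 / (2 * Real.sqrt lam)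
        ≤ (4 / Real.sqrt lam) * ‖x‖ ^ 2 := by
      have hx2 : (0:ℝ) ≤ ‖x‖ ^ 2 := sq_nonneg _
      have e1 : ‖x‖ ^ 2 / Real.sqrt lam = ‖x‖ ^ 2 * (Real.sqrt lam)⁻¹ := div_eq_mul_inv _ _
      have e2 : ‖x‖ ^ 2 / (2 * Real.sqrt lam) = ‖x‖ ^ 2 * (2 * Real.sqrt lam)⁻¹ :=
        div_eq_mul_inv _ _
      have e3 : (2 * Real.sqrt lam)⁻¹ ≤ (Real.sqrt lam)⁻¹ := by
        apply inv_anti₀ hsl; linarith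
      have e5 := mul_le_mul_of_nonneg_left e3 hx2
      have e4 : (4 / Real.sqrt lam) * ‖x‖ ^ 2 = ‖x‖ ^ 2 * (Real.sqrt lam)⁻¹ * 4 := by
        ring
      have hpos : 0 ≤ ‖x‖ ^ 2 * (Real.sqrt lam)⁻¹ := by positivity
      rw [e1, e2, e4]
      linarith
    linarith
  -- conclude
  have hc : 0 ≤ 2 * lam ^ (-(1 : ℝ)/4) := by positivity
  apply ContinuousLinearMap.opNorm_le_bound _ hc
  intro x
  have h1 := key x
  have h2 : (2 * lam ^ (-(1 : ℝ)/4) * ‖x‖) ^ 2 = 4 * (Real.sqrt lam)⁻¹ * ‖x‖ ^ 2 := by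
    have : (lam ^ (-(1 : ℝ)/4)) ^ 2 = lam ^ (-(1 : ℝ)/2) := by
      rw [← Real.rpow_natCast (lam ^ (-(1 : ℝ)/4)) 2, ← Real.rpow_mul hlam.le]
      norm_num
    rw [mul_pow, mul_pow, this]
    have hhalf : lam ^ (-(1 : ℝ)/2) = (Real.sqrt lam)⁻¹ := by
      rw [Real.sqrt_eq_rpow, ← Real.rpow_neg hlam.le]
      norm_num
    rw [hhalf]
    ring
  have h3 : ‖(R * A * T) x‖ ^ 2 ≤ (2 * lam ^ (-(1 : ℝ)/4) * ‖x‖) ^ 2 := by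
    rw [h2]
    have : (4 / Real.sqrt lam) * ‖x‖ ^ 2 = 4 * (Real.sqrt lam)⁻¹ * ‖x‖ ^ 2 := by
      ring
    linarith [h1, le_of_eq this]
  have h4 := Real.sqrt_le_sqrt h3
  rw [Real.sqrt_sq (norm_nonneg _), Real.sqrt_sq (by positivity)] at h4
  exact h4
end

section
/- Let T be a positive self-adjoint bounded operator on a Hilbert space and λ > 0. Then ‖(√λ I + T)^{1/2}(λI + T²)⁻¹‖ ≤ 2λ^{−3/4}. -/
open ContinuousLinearMap RealInnerProductSpace in
private theorem norm_sqrt_inv_le_aux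
    {E : Type*} [NormedAddCommGroup E] [InnerProductSpace ℝ E] [CompleteSpace E]
    (T : E →L[ℝ] E) (hT : T.IsPositive) (lam : ℝ) (hlam : 0 < lam)
    (R : E →L[ℝ] E) (hR : R.IsPositive)
    (hRsq : R * R = Real.sqrt lam • (1 : E →L[ℝ] E) + T)
    (u : E →L[ℝ] E)
    (hBu : ∀ x : E, (lam • (1 : E →L[ℝ] E) + T * T) (u x) = x)
    (x : E) : ‖R (u x)‖ ≤ 2 * lam ^ (-(3 : ℝ)/4) * ‖x‖ := by
  set B : E →L[ℝ] E := lam • (1 : E →L[ℝ] E) + T * T with hB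
  have hTsym : ∀ x y : E, ⟪T x, y⟫ = ⟪x, T y⟫ := fun x y =>
    hT.isSelfAdjoint.isSymmetric x y
  have hRsym : ∀ x y : E, ⟪R x, y⟫ = ⟪x, R y⟫ := fun x y =>
    hR.isSelfAdjoint.isSymmetric x y
  have hs : (0:ℝ) < Real.sqrt lam := Real.sqrt_pos.mpr hlam
  -- ⟪B y, y⟫ = lam ‖y‖² + ‖T y‖²
  have hBy : ∀ y : E, ⟪B y, y⟫ = lam * ‖y‖ ^ 2 + ‖T y‖ ^ 2 := by
    intro y
    have h1 : B y = lam • y + T (T y) := by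
      simp [hB, ContinuousLinearMap.add_apply, ContinuousLinearMap.mul_apply]
    rw [h1, inner_add_left, real_inner_smul_left, real_inner_self_eq_norm_sq,
      hTsym (T y) y, real_inner_self_eq_norm_sq]
  -- lower bound ‖B y‖ ≥ lam ‖y‖
  have hBlow : ∀ y : E, lam * ‖y‖ ≤ ‖B y‖ := by
    intro y
    have h1 : lam * ‖y‖ ^ 2 ≤ ⟪B y, y⟫ := by
      rw [hBy y]; nlinarith [sq_nonneg ‖T y‖]
    have h2 : ⟪B y, y⟫ ≤ ‖B y‖ * ‖y‖ := real_inner_le_norm _ _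
    rcases eq_or_lt_of_le (norm_nonneg y) with h | h
    · simp [← h]
    · nlinarith
  -- ‖u x‖ ≤ lam⁻¹ ‖x‖
  have hunorm : ∀ x : E, ‖u x‖ ≤ lam⁻¹ * ‖x‖ := by
    intro x
    have := hBlow (u x)
    rw [hBu x] at this
    rw [inv_mul_eq_div, le_div_iff₀ hlam]
    linarith
  -- ‖B y‖² ≥ 4 lam ‖T y‖²
  have hB2 : ∀ y : E, 4 * lam * ‖T y‖ ^ 2 ≤ ‖B y‖ ^ 2 := by
    intro y
    have hexp : ‖B y‖ ^ 2 = ‖lam • y - T (T y)‖ ^ 2 + 4 * lam * ‖T y‖ ^ 2 := by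
      have h1 : B y = lam • y + T (T y) := by
        simp [hB, ContinuousLinearMap.add_apply, ContinuousLinearMap.mul_apply]
      rw [h1, norm_add_sq_real, norm_sub_sq_real]
      have h2 : ⟪lam • y, T (T y)⟫ = lam * ‖T y‖ ^ 2 := by
        rw [real_inner_smul_left, ← hTsym y (T y), real_inner_self_eq_norm_sq]
      rw [h2]; ring
    nlinarith [sq_nonneg ‖lam • y - T (T y)‖]
  -- ‖T (u x)‖ ≤ ‖x‖ / (2 √lam)
  have hTu : ∀ x : E, ‖T (u x)‖ ≤ ‖x‖ / (2 * Real.sqrt lam) := by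
    intro x
    have h1 := hB2 (u x)
    rw [hBu x] at h1
    rw [le_div_iff₀ (by positivity)]
    nlinarith [norm_nonneg (T (u x)), norm_nonneg x, Real.sq_sqrt hlam.le,
      Real.sqrt_nonneg lam]
  -- key: ‖R (u x)‖² = √lam ‖u x‖² + ⟪T (u x), u x⟫
  have hRu : ∀ x : E, ‖R (u x)‖ ^ 2 =
      Real.sqrt lam * ‖u x‖ ^ 2 + ⟪T (u x), u x⟫ := by
    intro x
    have h1 : ‖R (u x)‖ ^ 2 = ⟪R (R (u x)), u x⟫ := by
      rw [← real_inner_self_eq_norm_sq]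
      exact (hRsym (R (u x)) (u x)).symm
    have h2 : R (R (u x)) = Real.sqrt lam • u x + T (u x) := by
      have := congrArg (fun f : E →L[ℝ] E => f (u x)) hRsq
      simpa [ContinuousLinearMap.mul_apply, ContinuousLinearMap.add_apply] using this
    rw [h1, h2, inner_add_left, real_inner_smul_left, real_inner_self_eq_norm_sq]
  -- rpow computation
  have hM : (2 * lam ^ (-(3 : ℝ)/4)) ^ 2 = 4 * (Real.sqrt lam / lam ^ 2) := by
    have h1 : (lam ^ (-(3 : ℝ)/4)) ^ 2 = lam ^ (-(3 : ℝ)/2) := by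
      rw [← Real.rpow_natCast (lam ^ (-(3:ℝ)/4)) 2, ← Real.rpow_mul hlam.le]
      norm_num
    have h2 : lam ^ (-(3 : ℝ)/2) = Real.sqrt lam / lam ^ 2 := by
      rw [Real.sqrt_eq_rpow, ← Real.rpow_natCast lam 2, ← Real.rpow_sub hlam]
      congr 1
      norm_num
    rw [mul_pow, h1, h2]; norm_num
  have key : ‖R (u x)‖ ^ 2 ≤ (2 * lam ^ (-(3 : ℝ)/4) * ‖x‖) ^ 2 := by
    have h1 : ⟪T (u x), u x⟫ ≤ (‖x‖ / (2 * Real.sqrt lam)) * (lam⁻¹ * ‖x‖) := by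
      calc ⟪T (u x), u x⟫ ≤ ‖T (u x)‖ * ‖u x‖ := real_inner_le_norm _ _
        _ ≤ (‖x‖ / (2 * Real.sqrt lam)) * (lam⁻¹ * ‖x‖) :=
          mul_le_mul (hTu x) (hunorm x) (norm_nonneg _) (by positivity)
    have h2 : Real.sqrt lam * ‖u x‖ ^ 2 ≤ Real.sqrt lam * (lam⁻¹ * ‖x‖) ^ 2 := by
      have ha := hunorm x
      have hb : ‖u x‖ ^ 2 ≤ (lam⁻¹ * ‖x‖) ^ 2 := by nlinarith [norm_nonneg (u x)]
      exact mul_le_mul_of_nonneg_left hb (Real.sqrt_nonneg lam)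
    have h3 : Real.sqrt lam * (lam⁻¹ * ‖x‖) ^ 2 + (‖x‖ / (2 * Real.sqrt lam)) * (lam⁻¹ * ‖x‖)
        ≤ 4 * (Real.sqrt lam / lam ^ 2) * ‖x‖ ^ 2 := by
      have hss : Real.sqrt lam * Real.sqrt lam = lam := Real.mul_self_sqrt hlam.le
      have ht1 : Real.sqrt lam * (lam⁻¹ * ‖x‖) ^ 2 = (Real.sqrt lam / lam ^ 2) * ‖x‖ ^ 2 := by
        field_simp
      have ht2 : (‖x‖ / (2 * Real.sqrt lam)) * (lam⁻¹ * ‖x‖)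
          = (Real.sqrt lam / (2 * lam ^ 2)) * ‖x‖ ^ 2 := by
        rw [div_mul_eq_mul_div, div_eq_iff (by positivity)]
        field_simp
        linear_combination (-‖x‖ ^ 2) * hss
      rw [ht1, ht2]
      have hle : Real.sqrt lam / (2 * lam ^ 2) ≤ Real.sqrt lam / lam ^ 2 := by
        apply div_le_div_of_nonneg_left (Real.sqrt_nonneg lam) (by positivity)
        nlinarith
      nlinarith [mul_le_mul_of_nonneg_right hle (sq_nonneg ‖x‖),
        mul_nonneg (div_nonneg (Real.sqrt_nonneg lam) (by positivity : (0:ℝ) ≤ lam ^ 2))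
          (sq_nonneg ‖x‖)]
    calc ‖R (u x)‖ ^ 2 = Real.sqrt lam * ‖u x‖ ^ 2 + ⟪T (u x), u x⟫ := hRu x
      _ ≤ Real.sqrt lam * (lam⁻¹ * ‖x‖) ^ 2 + (‖x‖ / (2 * Real.sqrt lam)) * (lam⁻¹ * ‖x‖) := by
          linarith
      _ ≤ 4 * (Real.sqrt lam / lam ^ 2) * ‖x‖ ^ 2 := h3
      _ = (2 * lam ^ (-(3 : ℝ)/4) * ‖x‖) ^ 2 := by rw [mul_pow, hM]
  have hnn : (0:ℝ) ≤ 2 * lam ^ (-(3 : ℝ)/4) * ‖x‖ := by positivity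
  nlinarith [norm_nonneg (R (u x))]

open ContinuousLinearMap RealInnerProductSpace in
/-- For a positive (self-adjoint) bounded operator `T` on a Hilbert space and `λ > 0`,
if `R` is the positive square root of `√λ I + T` then
`‖R (λI + T²)⁻¹‖ ≤ 2 λ^(-3/4)`. -/
theorem norm_sqrt_inv_le
    {E : Type*} [NormedAddCommGroup E] [InnerProductSpace ℝ E] [CompleteSpace E]
    (T : E →L[ℝ] E) (hT : T.IsPositive) (lam : ℝ) (hlam : 0 < lam)
    (R : E →L[ℝ] E) (hR : R.IsPositive)
    (hRsq : R * R = Real.sqrt lam • (1 : E →L[ℝ] E) + T)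
    [Invertible (lam • (1 : E →L[ℝ] E) + T * T)] :
    ‖R * ⅟(lam • (1 : E →L[ℝ] E) + T * T)‖ ≤ 2 * lam ^ (-(3 : ℝ)/4) := by
  apply ContinuousLinearMap.opNorm_le_bound _ (by positivity)
  intro x
  rw [ContinuousLinearMap.mul_apply]
  refine norm_sqrt_inv_le_aux T hT lam hlam R hR hRsq _ (fun y => ?_) x
  rw [← ContinuousLinearMap.mul_apply, mul_invOf_self, ContinuousLinearMap.one_apply]
end

section
/- Let L and T̂ be positive self-adjoint bounded operators on a Hilbert space and λ > 0. Then ‖(√λ I + L)(√λ I + T̂)⁻¹‖ ≤ (1 + λ^{−1/4}‖(√λ I + L)^{−1/2}(L − T̂)‖)², and consequently ‖(√λ I + L)^{1/2}(√λ I + T̂)^{−1/2}‖ ≤ 1 + λ^{−1/4}‖(√λ I + L)^{−1/2}(L − T̂)‖. -/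
/-- If `x ^ 2^n ≤ C * y ^ 2^n` for all `n` with everything nonneg, then `x ≤ y`. -/
private lemma aux_pow_two_pow_le {C x y : ℝ} (hx : 0 ≤ x) (hy : 0 ≤ y)
    (h : ∀ n : ℕ, x ^ (2 ^ n) ≤ C * y ^ (2 ^ n)) : x ≤ y := by
  by_contra hcon
  push_neg at hcon
  rcases eq_or_lt_of_le hy with hy0 | hy0
  · have h1 := h 1
    rw [← hy0] at h1
    simp at h1
    nlinarith [hcon, h1]
  · have hr : 1 < x / y := (one_lt_div hy0).mpr hcon
    obtain ⟨n, hn⟩ := pow_unbounded_of_one_lt C hr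
    have h2 : (x / y) ^ (2 ^ n) ≤ C := by
      rw [div_pow, div_le_iff₀ (by positivity)]
      exact h n
    have h3 : (x / y) ^ n ≤ (x / y) ^ (2 ^ n) :=
      pow_le_pow_right₀ hr.le (Nat.lt_two_pow_self).le
    linarith

private lemma aux_conj_pow {A : Type*} [Ring A] (R N : A) [Invertible R] :
    ∀ n : ℕ, (R * N * ⅟R) ^ n = R * N ^ n * ⅟R := by
  intro n
  induction n with
  | zero => simp
  | succ k ih =>
    rw [pow_succ, ih, pow_succ]
    simp only [mul_assoc, invOf_mul_cancel_left]

set_option maxHeartbeats 1000000 in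
private lemma aux_main
    {E : Type*} [NormedAddCommGroup E] [InnerProductSpace ℝ E] [CompleteSpace E]
    (Aop Bop D RL RT : E →L[ℝ] E) [Invertible RL] [Invertible RT] [Invertible Bop]
    (hA : RL * RL = Aop) (hB : RT * RT = Bop) (hD : Aop = Bop + D)
    (sRL : star RL = RL) (sRT : star RT = RT)
    (sA : star Aop = Aop) (sB : star Bop = Bop) (sD : star D = D)
    (q : ℝ) (hq : 0 < q) (hinvRT : ‖(⅟RT : E →L[ℝ] E)‖ ≤ q⁻¹) :
    ‖Aop * ⅟Bop‖ ≤ (1 + q⁻¹ * ‖⅟RL * D‖) ^ 2 ∧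
      ‖RL * ⅟RT‖ ≤ 1 + q⁻¹ * ‖⅟RL * D‖ := by
  have sinvB : star (⅟Bop) = ⅟Bop := by
    have h1 : star (⅟Bop) * Bop = 1 := by
      calc star (⅟Bop) * Bop = star (star Bop * ⅟Bop) := by rw [star_mul, star_star]
        _ = star (Bop * ⅟Bop) := by rw [sB]
        _ = 1 := by rw [mul_invOf_self, star_one]
    exact (invOf_eq_left_inv h1).symm
  have sinvRT : star (⅟RT) = ⅟RT := by
    have h1 : star (⅟RT) * RT = 1 := by
      calc star (⅟RT) * RT = star (star RT * ⅟RT) := by rw [star_mul, star_star]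
        _ = star (RT * ⅟RT) := by rw [sRT]
        _ = 1 := by rw [mul_invOf_self, star_one]
    exact (invOf_eq_left_inv h1).symm
  set x := ‖RL * ⅟RT‖ with hxdef
  set c := q⁻¹ * ‖⅟RL * D‖ with hcdef
  have hc0 : 0 ≤ c := by
    rw [hcdef]
    positivity
  have hx0 : 0 ≤ x := norm_nonneg _
  have hinvB : (⅟Bop : E →L[ℝ] E) = ⅟RT * ⅟RT := by
    apply invOf_eq_right_inv
    rw [← hB]
    calc RT * RT * (⅟RT * ⅟RT) = RT * (RT * (⅟RT * ⅟RT)) := by rw [mul_assoc]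
      _ = RT * ⅟RT := by rw [mul_invOf_cancel_left]
      _ = 1 := mul_invOf_self RT
  have sX : star (RL * ⅟RT) = ⅟RT * RL := by rw [star_mul, sinvRT, sRL]
  have hQnorm : ‖RL * ⅟Bop * RL‖ = x ^ 2 := by
    have h : RL * ⅟Bop * RL = (RL * ⅟RT) * star (RL * ⅟RT) := by
      rw [sX, hinvB]
      simp only [mul_assoc]
    rw [hxdef, sq, h]
    exact CStarRing.norm_self_mul_star
  have hAinvRL : Aop * ⅟RL = RL := by
    rw [← hA, mul_assoc, mul_invOf_self, mul_one]
  have hQconj : RL * ⅟Bop * RL = RL * (⅟Bop * Aop) * ⅟RL := by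
    calc RL * ⅟Bop * RL = RL * ⅟Bop * (Aop * ⅟RL) := by rw [hAinvRL]
      _ = RL * (⅟Bop * Aop) * ⅟RL := by simp only [mul_assoc]
  have hQsa : IsSelfAdjoint (RL * ⅟Bop * RL) := by
    show star _ = _
    rw [star_mul, star_mul, sRL, sinvB, mul_assoc]
  have hkey : ‖RL * ⅟Bop * RL‖ ≤ ‖(⅟Bop * Aop : E →L[ℝ] E)‖ := by
    apply aux_pow_two_pow_le (C := ‖(⅟RL : E →L[ℝ] E)‖ * ‖RL‖) (norm_nonneg _) (norm_nonneg _)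
    intro n
    have h1 : ‖RL * ⅟Bop * RL‖ ^ (2 ^ n) = ‖(RL * ⅟Bop * RL) ^ (2 ^ n)‖ := by
      have h : ‖(RL * ⅟Bop * RL) ^ 2 ^ n‖₊ = ‖RL * ⅟Bop * RL‖₊ ^ 2 ^ n :=
        hQsa.nnnorm_pow_two_pow n
      rw [← coe_nnnorm, ← coe_nnnorm, ← NNReal.coe_pow, h]
    rw [h1, hQconj, aux_conj_pow]
    have hpos : 0 < 2 ^ n := Nat.two_pow_pos n
    calc ‖RL * (⅟Bop * Aop) ^ (2 ^ n) * ⅟RL‖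
        ≤ ‖RL * (⅟Bop * Aop) ^ (2 ^ n)‖ * ‖(⅟RL : E →L[ℝ] E)‖ := norm_mul_le _ _
      _ ≤ (‖RL‖ * ‖((⅟Bop * Aop : E →L[ℝ] E)) ^ (2 ^ n)‖) * ‖(⅟RL : E →L[ℝ] E)‖ := by
          gcongr
          exact norm_mul_le _ _
      _ ≤ ‖RL‖ * ‖(⅟Bop * Aop : E →L[ℝ] E)‖ ^ (2 ^ n) * ‖(⅟RL : E →L[ℝ] E)‖ := by
          gcongr
          exact norm_pow_le' _ hpos
      _ = ‖(⅟RL : E →L[ℝ] E)‖ * ‖RL‖ * ‖(⅟Bop * Aop : E →L[ℝ] E)‖ ^ (2 ^ n) := by ring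
  have hNA : ‖(⅟Bop * Aop : E →L[ℝ] E)‖ = ‖Aop * ⅟Bop‖ := by
    have h := norm_star (⅟Bop * Aop)
    rw [star_mul, sA, sinvB] at h
    exact h.symm
  have hx2 : x ^ 2 ≤ ‖Aop * ⅟Bop‖ := by
    rw [← hQnorm, ← hNA]
    exact hkey
  have hABsplit : Aop * ⅟Bop = 1 + D * ⅟Bop := by
    rw [hD, add_mul, mul_invOf_self]
  have hRTRL : ‖(⅟RT * RL : E →L[ℝ] E)‖ = x := by
    have h := norm_star (RL * ⅟RT)
    rw [sX] at h
    exact h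
  have hDB : ‖(D * ⅟Bop : E →L[ℝ] E)‖ ≤ q⁻¹ * x * ‖⅟RL * D‖ := by
    have h1 : ‖(D * ⅟Bop : E →L[ℝ] E)‖ = ‖(⅟Bop * D : E →L[ℝ] E)‖ := by
      have h := norm_star (⅟Bop * D)
      rw [star_mul, sD, sinvB] at h
      exact h
    have h2 : (⅟Bop * D : E →L[ℝ] E) = ⅟RT * ((⅟RT * RL) * (⅟RL * D)) := by
      rw [hinvB]
      simp only [mul_assoc, mul_invOf_cancel_left]
    rw [h1, h2]
    calc ‖⅟RT * ((⅟RT * RL) * (⅟RL * D))‖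
        ≤ ‖(⅟RT : E →L[ℝ] E)‖ * ‖(⅟RT * RL : E →L[ℝ] E) * (⅟RL * D)‖ := norm_mul_le _ _
      _ ≤ ‖(⅟RT : E →L[ℝ] E)‖ * (‖(⅟RT * RL : E →L[ℝ] E)‖ * ‖⅟RL * D‖) :=
          mul_le_mul_of_nonneg_left (norm_mul_le _ _) (norm_nonneg _)
      _ ≤ q⁻¹ * (x * ‖⅟RL * D‖) := by
          rw [hRTRL]
          gcongr
      _ = q⁻¹ * x * ‖⅟RL * D‖ := by ring
  have hABle : ‖Aop * ⅟Bop‖ ≤ 1 + c * x := by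
    rw [hABsplit]
    calc ‖(1 : E →L[ℝ] E) + D * ⅟Bop‖
        ≤ ‖(1 : E →L[ℝ] E)‖ + ‖(D * ⅟Bop : E →L[ℝ] E)‖ := norm_add_le _ _
      _ ≤ 1 + q⁻¹ * x * ‖⅟RL * D‖ := by
          have hone : ‖(1 : E →L[ℝ] E)‖ ≤ 1 := ContinuousLinearMap.norm_id_le
          linarith [hDB]
      _ = 1 + c * x := by rw [hcdef]; ring
  have hxle : x ≤ 1 + c := by nlinarith [hx2, hABle]
  exact ⟨by nlinarith [hABle, hxle, hc0, hx0], hxle⟩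

/-- For positive (self-adjoint) bounded operators `L`, `T̂` on a Hilbert space and `λ > 0`,
with `RL`, `RT` the positive square roots of `√λ I + L` and `√λ I + T̂`:
`‖(√λ I + L)(√λ I + T̂)⁻¹‖ ≤ (1 + λ^{−1/4} ‖(√λ I + L)^{−1/2}(L − T̂)‖)²`, and consequently
`‖(√λ I + L)^{1/2} (√λ I + T̂)^{−1/2}‖ ≤ 1 + λ^{−1/4} ‖(√λ I + L)^{−1/2}(L − T̂)‖`. -/
theorem norm_shift_mul_inv_shift_le
    {E : Type*} [NormedAddCommGroup E] [InnerProductSpace ℝ E] [CompleteSpace E]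
    (L Th : E →L[ℝ] E) (hL : L.IsPositive) (hTh : Th.IsPositive)
    (lam : ℝ) (hlam : 0 < lam)
    (RL RT : E →L[ℝ] E) (hRL : RL.IsPositive) (hRT : RT.IsPositive)
    (hRLsq : RL * RL = Real.sqrt lam • (1 : E →L[ℝ] E) + L)
    (hRTsq : RT * RT = Real.sqrt lam • (1 : E →L[ℝ] E) + Th)
    [Invertible RL] [Invertible RT]
    [Invertible (Real.sqrt lam • (1 : E →L[ℝ] E) + Th)] :
    ‖(Real.sqrt lam • (1 : E →L[ℝ] E) + L) *
        ⅟(Real.sqrt lam • (1 : E →L[ℝ] E) + Th)‖ ≤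
      (1 + lam ^ (-(1 : ℝ)/4) * ‖⅟RL * (L - Th)‖) ^ 2 ∧
    ‖RL * ⅟RT‖ ≤ 1 + lam ^ (-(1 : ℝ)/4) * ‖⅟RL * (L - Th)‖ := by
  have hlamq_pos : (0:ℝ) < lam ^ ((1:ℝ)/4) := Real.rpow_pos_of_pos hlam _
  have hlamq_sq : lam ^ ((1:ℝ)/4) * lam ^ ((1:ℝ)/4) = Real.sqrt lam := by
    rw [← Real.rpow_add hlam, Real.sqrt_eq_rpow]
    norm_num
  have hcneg : lam ^ (-(1 : ℝ)/4) = (lam ^ ((1:ℝ)/4))⁻¹ := by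
    rw [neg_div, Real.rpow_neg hlam.le]
  -- star facts
  have sL : star L = L := hL.isSelfAdjoint
  have sTh : star Th = Th := hTh.isSelfAdjoint
  have sRL : star RL = RL := hRL.isSelfAdjoint
  have sRT : star RT = RT := hRT.isSelfAdjoint
  have sA : star (Real.sqrt lam • (1 : E →L[ℝ] E) + L) = Real.sqrt lam • (1 : E →L[ℝ] E) + L := by
    simp [star_add, star_smul, sL]
  have sB : star (Real.sqrt lam • (1 : E →L[ℝ] E) + Th)
      = Real.sqrt lam • (1 : E →L[ℝ] E) + Th := by
    simp [star_add, star_smul, sTh]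
  have sD : star (L - Th) = L - Th := by rw [star_sub, sL, sTh]
  -- lower bound for RT
  have hRTlower : ∀ w : E, lam ^ ((1:ℝ)/4) * ‖w‖ ≤ ‖RT w‖ := by
    intro w
    have hsym := hRT.1
    have h1 : (inner ℝ (RT w) (RT w) : ℝ) = inner ℝ ((RT * RT) w) w := by
      rw [ContinuousLinearMap.mul_apply]
      exact (hsym (RT w) w).symm
    have h2 : (inner ℝ ((RT * RT) w) w : ℝ)
        = Real.sqrt lam * (inner ℝ w w : ℝ) + inner ℝ (Th w) w := by
      rw [hRTsq]
      simp [ContinuousLinearMap.add_apply, inner_add_left, real_inner_smul_left]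
    have h3 : (0:ℝ) ≤ (inner ℝ (Th w) w : ℝ) := by
      have := hTh.inner_nonneg_left w
      simpa using this
    have h4 : (lam ^ ((1:ℝ)/4) * ‖w‖) ^ 2 ≤ ‖RT w‖ ^ 2 := by
      have e1 : (inner ℝ (RT w) (RT w) : ℝ) = ‖RT w‖ ^ 2 := real_inner_self_eq_norm_sq _
      have e2 : (inner ℝ w w : ℝ) = ‖w‖ ^ 2 := real_inner_self_eq_norm_sq _
      have h5 : Real.sqrt lam * ‖w‖ ^ 2 ≤ ‖RT w‖ ^ 2 := by
        rw [← e1, h1, h2, ← e2]; linarith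
      calc (lam ^ ((1:ℝ)/4) * ‖w‖) ^ 2
          = (lam ^ ((1:ℝ)/4) * lam ^ ((1:ℝ)/4)) * ‖w‖ ^ 2 := by ring
        _ = Real.sqrt lam * ‖w‖ ^ 2 := by rw [hlamq_sq]
        _ ≤ ‖RT w‖ ^ 2 := h5
    nlinarith [norm_nonneg (RT w), norm_nonneg w, hlamq_pos.le,
      mul_nonneg hlamq_pos.le (norm_nonneg w)]
  -- operator norm bound for ⅟RT
  have hinvRT : ‖(⅟RT : E →L[ℝ] E)‖ ≤ (lam ^ ((1:ℝ)/4))⁻¹ := by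
    apply ContinuousLinearMap.opNorm_le_bound _ (by positivity)
    intro z
    have h1 := hRTlower (⅟RT z)
    have h2 : RT (⅟RT z) = z := by
      rw [← ContinuousLinearMap.mul_apply, mul_invOf_self, ContinuousLinearMap.one_apply]
    rw [h2] at h1
    rw [inv_mul_eq_div, le_div_iff₀ hlamq_pos]
    linarith
  have hD : (Real.sqrt lam • (1 : E →L[ℝ] E) + L)
      = (Real.sqrt lam • (1 : E →L[ℝ] E) + Th) + (L - Th) := by abel
  obtain ⟨h1, h2⟩ := aux_main (Real.sqrt lam • (1 : E →L[ℝ] E) + L)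
    (Real.sqrt lam • (1 : E →L[ℝ] E) + Th) (L - Th) RL RT
    hRLsq hRTsq hD sRL sRT sA sB sD (lam ^ ((1:ℝ)/4)) hlamq_pos hinvRT
  rw [hcneg]
  exact ⟨h1, h2⟩
end

section
/- Let A and B be positive self-adjoint bounded operators on a Hilbert space and s ∈ [0,1]. Then ‖A^s B^s‖ ≤ ‖AB‖^s (Cordes inequality). -/
open scoped ENNReal NNReal
open Filter Set Topology

section cordesAux

variable {𝔸 : Type*} [CStarAlgebra 𝔸]

/-- Auxiliary: real power of an element via the continuous functional calculus. -/
noncomputable def cordesPw (a : 𝔸) (s : ℝ) : 𝔸 := cfc (fun t : ℝ => t ^ s) a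

lemma cordes_contOn {s : ℝ} (hs : 0 ≤ s) (S : Set ℝ) :
    ContinuousOn (fun x : ℝ => x ^ s) S :=
  fun x _ => (Real.continuousAt_rpow_const x s (Or.inr hs)).continuousWithinAt

lemma cordesPw_sa (a : 𝔸) (s : ℝ) : IsSelfAdjoint (cordesPw a s) :=
  cfc_predicate _ a

lemma cordesPw_mul (a : 𝔸) {s t : ℝ} (hs : 0 ≤ s) (ht : 0 ≤ t)
    (ha' : ∀ x ∈ spectrum ℝ a, (0:ℝ) ≤ x) :
    cordesPw a s * cordesPw a t = cordesPw a (s + t) := by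
  rw [cordesPw, cordesPw, cordesPw, ← cfc_mul _ _ a (cordes_contOn hs _) (cordes_contOn ht _)]
  exact cfc_congr fun x hx => (Real.rpow_add_of_nonneg (ha' x hx) hs ht).symm

lemma cordesPw_one (a : 𝔸) (ha : IsSelfAdjoint a) : cordesPw a 1 = a := by
  rw [cordesPw]
  have : cfc (fun t : ℝ => t ^ (1:ℝ)) a = cfc (id : ℝ → ℝ) a :=
    cfc_congr fun x _ => Real.rpow_one x
  rw [this, cfc_id ℝ a]

lemma cordesPw_zero (a : 𝔸) (ha : IsSelfAdjoint a) : cordesPw a 0 = 1 := by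
  rw [cordesPw]
  have : cfc (fun t : ℝ => t ^ (0:ℝ)) a = cfc (fun _ : ℝ => (1:ℝ)) a :=
    cfc_congr fun x _ => Real.rpow_zero x
  rw [this, cfc_const_one ℝ a]

lemma cordes_spectralRadius_mul_comm (x y : 𝔸) :
    spectralRadius ℂ (x * y) = spectralRadius ℂ (y * x) := by
  have key : ∀ u v : 𝔸, spectralRadius ℂ (u * v) ≤ spectralRadius ℂ (v * u) := by
    intro u v
    rw [spectralRadius, spectralRadius]
    refine iSup₂_le fun k hk => ?_
    rcases eq_or_ne k 0 with rfl | hk0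
    · simp
    · have hk' : k ∈ spectrum ℂ (v * u) := by
        have h1 : k ∈ spectrum ℂ (u * v) \ {0} := ⟨hk, hk0⟩
        rw [spectrum.nonzero_mul_comm] at h1
        exact h1.1
      exact le_iSup₂ (f := fun k (_ : k ∈ spectrum ℂ (v * u)) => (‖k‖₊ : ℝ≥0∞)) k hk'
  exact le_antisymm (key x y) (key y x)

lemma cordes_midpoint [Nontrivial 𝔸] (a b : 𝔸)
    (ha' : ∀ x ∈ spectrum ℝ a, (0:ℝ) ≤ x) (hb' : ∀ x ∈ spectrum ℝ b, (0:ℝ) ≤ x)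
    {s t : ℝ} (hs : 0 ≤ s) (ht : 0 ≤ t) :
    ‖cordesPw a ((s+t)/2) * cordesPw b ((s+t)/2)‖₊ *
      ‖cordesPw a ((s+t)/2) * cordesPw b ((s+t)/2)‖₊ ≤
    ‖cordesPw a s * cordesPw b s‖₊ * ‖cordesPw a t * cordesPw b t‖₊ := by
  set u := (s+t)/2 with hu
  have hu0 : 0 ≤ u := by rw [hu]; positivity
  set X := cordesPw a u * cordesPw b u with hX
  have hstar : star X = cordesPw b u * cordesPw a u := by
    rw [hX, star_mul, (cordesPw_sa a u).star_eq, (cordesPw_sa b u).star_eq]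
  have h1 : ‖X‖₊ * ‖X‖₊ = ‖star X * X‖₊ := (CStarRing.nnnorm_star_mul_self (x := X)).symm
  have hT : IsSelfAdjoint (star X * X) := IsSelfAdjoint.star_mul_self X
  have h2 : (‖star X * X‖₊ : ℝ≥0∞) = spectralRadius ℂ (star X * X) :=
    hT.spectralRadius_eq_nnnorm.symm
  have hE : star X * X = cordesPw b u * (cordesPw a (u+u) * cordesPw b u) := by
    rw [hstar, hX, ← cordesPw_mul a hu0 hu0 ha']
    simp only [mul_assoc]
  have huu : u + u = s + t := by rw [hu]; ring
  have h3 : spectralRadius ℂ (star X * X) =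
      spectralRadius ℂ (cordesPw a (s+t) * cordesPw b (s+t)) := by
    rw [hE, cordes_spectralRadius_mul_comm, mul_assoc, cordesPw_mul b hu0 hu0 hb', huu]
  have h4 : spectralRadius ℂ (cordesPw a (s+t) * cordesPw b (s+t))
      = spectralRadius ℂ ((cordesPw a t * cordesPw b (s+t)) * cordesPw a s) := by
    rw [← cordesPw_mul a hs ht ha', mul_assoc, cordes_spectralRadius_mul_comm]
  have hsplit : cordesPw a t * cordesPw b (s+t) * cordesPw a s
      = (cordesPw a t * cordesPw b t) * (cordesPw b s * cordesPw a s) := by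
    rw [show s + t = t + s from add_comm s t, ← cordesPw_mul b ht hs hb']
    simp only [mul_assoc]
  have h5 : spectralRadius ℂ ((cordesPw a t * cordesPw b (s+t)) * cordesPw a s)
      ≤ (‖(cordesPw a t * cordesPw b t) * (cordesPw b s * cordesPw a s)‖₊ : ℝ≥0∞) := by
    rw [← hsplit]
    exact spectrum.spectralRadius_le_nnnorm _
  have h8 : ‖cordesPw b s * cordesPw a s‖₊ = ‖cordesPw a s * cordesPw b s‖₊ := by
    rw [← nnnorm_star, star_mul, (cordesPw_sa a s).star_eq, (cordesPw_sa b s).star_eq]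
  have h6 : ‖(cordesPw a t * cordesPw b t) * (cordesPw b s * cordesPw a s)‖₊
      ≤ ‖cordesPw a t * cordesPw b t‖₊ * ‖cordesPw a s * cordesPw b s‖₊ := by
    rw [← h8]; exact nnnorm_mul_le _ _
  have main : (‖X‖₊ * ‖X‖₊ : ℝ≥0∞) ≤
      (‖cordesPw a t * cordesPw b t‖₊ * ‖cordesPw a s * cordesPw b s‖₊ : ℝ≥0∞) := by
    calc (‖X‖₊ * ‖X‖₊ : ℝ≥0∞) = (‖star X * X‖₊ : ℝ≥0∞) := by rw [← ENNReal.coe_mul, h1]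
    _ = spectralRadius ℂ (star X * X) := h2
    _ = spectralRadius ℂ ((cordesPw a t * cordesPw b (s+t)) * cordesPw a s) := by
        rw [h3, h4]
    _ ≤ (‖(cordesPw a t * cordesPw b t) * (cordesPw b s * cordesPw a s)‖₊ : ℝ≥0∞) := h5
    _ ≤ (‖cordesPw a t * cordesPw b t‖₊ * ‖cordesPw a s * cordesPw b s‖₊ : ℝ≥0∞) := by
        exact_mod_cast h6
  rw [mul_comm (‖cordesPw a s * cordesPw b s‖₊)]
  exact_mod_cast main

lemma cordesPw_tendsto [Nontrivial 𝔸] (a : 𝔸) {r₀ : ℝ} (hr : 0 < r₀) :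
    Tendsto (fun r => cordesPw a r) (𝓝 r₀) (𝓝 (cordesPw a r₀)) := by
  set U : Set ℝ := Icc (r₀/2) (r₀+1) with hU
  have hUnhds : U ∈ 𝓝 r₀ := Icc_mem_nhds (by linarith) (by linarith)
  set V : Set ℝ := Icc (-‖a‖) ‖a‖ with hV
  have hsubV : spectrum ℝ a ⊆ V := by
    intro x hx
    have := spectrum.norm_le_norm_of_mem hx
    rw [Real.norm_eq_abs, abs_le] at this
    exact ⟨this.1, this.2⟩
  set F : ℝ → ℝ → ℝ := fun r x => x ^ r with hF
  have hcont : ContinuousOn (Function.uncurry F) (U ×ˢ V) := by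
    intro p hp
    have hppos : (0:ℝ) < p.1 := lt_of_lt_of_le (by linarith) hp.1.1
    have : ContinuousAt (Function.uncurry F) p := by
      have h1 : ContinuousAt (fun q : ℝ × ℝ => q.1 ^ q.2) (p.2, p.1) :=
        Real.continuousAt_rpow (p.2, p.1) (Or.inr hppos)
      exact ContinuousAt.comp (g := fun q : ℝ × ℝ => q.1 ^ q.2)
        (x := p) h1 ((continuous_snd.prodMk continuous_fst).continuousAt)
    exact this.continuousWithinAt
  have hK : IsCompact (U ×ˢ V) := isCompact_Icc.prod isCompact_Icc
  have hUC : UniformContinuousOn (Function.uncurry F) (U ×ˢ V) :=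
    hK.uniformContinuousOn_of_continuous hcont
  have hTU : TendstoUniformlyOn F (F r₀) (𝓝[U] r₀) V :=
    hUC.tendstoUniformlyOn ⟨by linarith, by linarith⟩
  rw [nhdsWithin_eq_nhds.2 hUnhds] at hTU
  rw [Metric.tendstoUniformlyOn_iff] at hTU
  rw [Metric.tendsto_nhds]
  intro ε hε
  filter_upwards [hTU (ε/2) (half_pos hε), eventually_gt_nhds hr] with r h1 h2
  have hle : ‖cordesPw a r - cordesPw a r₀‖ ≤ ε/2 := by
    rw [cordesPw, cordesPw,
      ← cfc_sub _ _ a (cordes_contOn h2.le _) (cordes_contOn hr.le _)]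
    refine norm_cfc_le (by linarith) fun x hx => ?_
    have := h1 x (hsubV hx)
    rw [dist_eq_norm] at this
    rw [show x ^ r - x ^ r₀ = -(x ^ r₀ - x ^ r) by ring, norm_neg]
    exact this.le
  rw [dist_eq_norm]
  exact lt_of_le_of_lt hle (by linarith)

theorem cordes_general (a b : 𝔸) (ha : IsSelfAdjoint a) (hb : IsSelfAdjoint b)
    (ha' : ∀ x ∈ spectrum ℝ a, (0:ℝ) ≤ x) (hb' : ∀ x ∈ spectrum ℝ b, (0:ℝ) ≤ x)
    {s : ℝ} (hs0 : 0 ≤ s) (hs1 : s ≤ 1) :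
    ‖cordesPw a s * cordesPw b s‖ ≤ ‖a * b‖ ^ s := by
  rcases subsingleton_or_nontrivial 𝔸 with hsub | hnt
  · rw [Subsingleton.elim (cordesPw a s * cordesPw b s) 0, norm_zero]
    exact Real.rpow_nonneg (norm_nonneg _) s
  set C : ℝ := ‖a * b‖ with hC
  have hC0 : 0 ≤ C := norm_nonneg _
  set f : ℝ → ℝ := fun r => ‖cordesPw a r * cordesPw b r‖ with hf
  have hf0 : ∀ r, 0 ≤ f r := fun r => norm_nonneg _
  have hmid : ∀ s' t' : ℝ, 0 ≤ s' → 0 ≤ t' →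
      f ((s'+t')/2) * f ((s'+t')/2) ≤ f s' * f t' := by
    intro s' t' hs' ht'
    exact_mod_cast cordes_midpoint a b ha' hb' hs' ht'
  have hfzero : f 0 ≤ 1 := by
    rw [hf]
    simp only [cordesPw_zero a ha, cordesPw_zero b hb, one_mul, norm_one, le_refl]
  have hfone : f 1 = C := by
    rw [hf, hC]
    simp only [cordesPw_one a ha, cordesPw_one b hb]
  have sqrt_step : ∀ x y : ℝ, 0 ≤ x → 0 ≤ y → x * x ≤ y * y → x ≤ y := by
    intro x y hx hy hxy
    nlinarith
  have dyadic : ∀ n : ℕ, ∀ j : ℕ, j ≤ 2^n → f ((j : ℝ) / 2^n) ≤ C ^ ((j:ℝ) / 2^n) := by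
    intro n
    induction n with
    | zero =>
      intro j hj
      interval_cases j
      · simpa using hfzero.trans_eq (Real.rpow_zero C).symm
      · simpa [Real.rpow_one] using hfone.le
    | succ n ih =>
      intro j hj
      have h2n : (2:ℕ)^(n+1) = 2 * 2^n := by ring
      rcases Nat.even_or_odd j with ⟨m, hm⟩ | ⟨m, hm⟩
      · have hm2 : m ≤ 2^n := by omega
        have hcastj : ((j:ℝ)) / 2^(n+1) = (m:ℝ) / 2^n := by
          subst hm; push_cast; ring
        rw [hcastj]
        exact ih m hm2
      · have hm1 : m + 1 ≤ 2^n := by omega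
        have hmle : m ≤ 2^n := by omega
        have key := hmid ((m:ℝ)/2^n) (((m:ℝ)+1)/2^n) (by positivity) (by positivity)
        have hmidpt : (((m:ℝ)/2^n) + (((m:ℝ)+1)/2^n))/2 = (j:ℝ)/2^(n+1) := by
          subst hm; push_cast; ring
        rw [hmidpt] at key
        have h1 := ih m hmle
        have h2 := ih (m+1) hm1
        push_cast at h2
        have hprod : f ((m:ℝ)/2^n) * f (((m:ℝ)+1)/2^n)
            ≤ C ^ ((m:ℝ)/2^n) * C ^ (((m:ℝ)+1)/2^n) :=
          mul_le_mul h1 h2 (hf0 _) (Real.rpow_nonneg hC0 _)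
        have hsum : C ^ ((m:ℝ)/2^n) * C ^ (((m:ℝ)+1)/2^n)
            = C ^ ((j:ℝ)/2^(n+1)) * C ^ ((j:ℝ)/2^(n+1)) := by
          rw [← Real.rpow_add_of_nonneg hC0 (by positivity) (by positivity),
            ← Real.rpow_add_of_nonneg hC0 (by positivity) (by positivity)]
          congr 1
          subst hm; push_cast; ring
        refine sqrt_step _ _ (hf0 _) (Real.rpow_nonneg hC0 _) ?_
        calc f ((j:ℝ)/2^(n+1)) * f ((j:ℝ)/2^(n+1))
            ≤ f ((m:ℝ)/2^n) * f (((m:ℝ)+1)/2^n) := key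
          _ ≤ C ^ ((m:ℝ)/2^n) * C ^ (((m:ℝ)+1)/2^n) := hprod
          _ = C ^ ((j:ℝ)/2^(n+1)) * C ^ ((j:ℝ)/2^(n+1)) := hsum
  rcases eq_or_lt_of_le hs0 with hzero | hpos
  · rw [← hzero, Real.rpow_zero]
    rw [← hzero] at *
    exact hfzero
  · set j : ℕ → ℕ := fun n => ⌈s * 2^n⌉₊ with hj
    set q : ℕ → ℝ := fun n => (j n : ℝ)/2^n with hq
    have hq_ge : ∀ n, s ≤ q n := by
      intro n
      rw [hq]
      simp only
      rw [le_div_iff₀ (by positivity)]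
      exact Nat.le_ceil _
    have hq_le : ∀ n, q n ≤ s + (1/2:ℝ)^n := by
      intro n
      have h1 : (⌈s * 2^n⌉₊ : ℝ) < s * 2^n + 1 := Nat.ceil_lt_add_one (by positivity)
      rw [hq]
      simp only
      rw [div_le_iff₀ (by positivity)]
      have h2 : ((1:ℝ)/2)^n * 2^n = 1 := by
        rw [← mul_pow]; norm_num
      nlinarith [pow_pos (show (0:ℝ) < 2 by norm_num) n]
    have hjle : ∀ n, j n ≤ 2^n := by
      intro n
      rw [hj]
      simp only
      rw [Nat.ceil_le]
      push_cast
      nlinarith [pow_pos (show (0:ℝ) < 2 by norm_num) n]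
    have hq_pos : ∀ n, 0 < q n := fun n => lt_of_lt_of_le hpos (hq_ge n)
    have hq_tendsto : Tendsto q atTop (𝓝 s) := by
      have hhalf : Tendsto (fun n : ℕ => s + (1/2:ℝ)^n) atTop (𝓝 (s + 0)) :=
        tendsto_const_nhds.add
          (tendsto_pow_atTop_nhds_zero_of_lt_one (by norm_num) (by norm_num))
      rw [add_zero] at hhalf
      exact tendsto_of_tendsto_of_tendsto_of_le_of_le tendsto_const_nhds hhalf hq_ge hq_le
    have hbound : ∀ n, f (q n) ≤ C ^ (q n) := fun n => dyadic n (j n) (hjle n)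
    have hfq : Tendsto (fun n => f (q n)) atTop (𝓝 (f s)) := by
      have h1 := cordesPw_tendsto (𝔸 := 𝔸) a hpos
      have h2 := cordesPw_tendsto (𝔸 := 𝔸) b hpos
      have hft : Tendsto f (𝓝 s) (𝓝 (f s)) := (h1.mul h2).norm
      exact hft.comp hq_tendsto
    have hCq : Tendsto (fun n => C ^ (q n)) atTop (𝓝 (C ^ s)) := by
      rcases eq_or_lt_of_le hC0 with hCz | hCp
      · have hz : ∀ n, C ^ (q n) = 0 := fun n => by
          rw [← hCz, Real.zero_rpow (ne_of_gt (hq_pos n))]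
        have heq : (fun n => C ^ (q n)) = fun _ : ℕ => (0:ℝ) := funext hz
        rw [heq, ← hCz, Real.zero_rpow (ne_of_gt hpos)]
        exact tendsto_const_nhds
      · have hcontC : ContinuousAt (fun y : ℝ => C ^ y) s := by
          have h0 : ContinuousAt (fun q : ℝ × ℝ => q.1 ^ q.2) (C, s) :=
            Real.continuousAt_rpow (C, s) (Or.inl (ne_of_gt hCp))
          exact ContinuousAt.comp (g := fun q : ℝ × ℝ => q.1 ^ q.2) (x := s) h0
            ((continuous_const.prodMk continuous_id).continuousAt)
        exact hcontC.tendsto.comp hq_tendsto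
    exact le_of_tendsto_of_tendsto' hfq hCq hbound

end cordesAux

/-- Cordes inequality: for positive (self-adjoint) bounded operators `A`, `B` on a
Hilbert space and `s ∈ [0,1]`, one has `‖A^s B^s‖ ≤ ‖A B‖^s`, where fractional powers
are defined through the continuous functional calculus. -/
theorem cordes_inequality
    {E : Type*} [NormedAddCommGroup E] [InnerProductSpace ℂ E] [CompleteSpace E]
    (A B : E →L[ℂ] E) (hA : A.IsPositive) (hB : B.IsPositive)
    (s : ℝ) (hs0 : 0 ≤ s) (hs1 : s ≤ 1) :
    ‖cfc (fun t : ℝ => t ^ s) A * cfc (fun t : ℝ => t ^ s) B‖ ≤ ‖A * B‖ ^ s := by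
  have hA0 : 0 ≤ A := (ContinuousLinearMap.nonneg_iff_isPositive A).mpr hA
  have hB0 : 0 ≤ B := (ContinuousLinearMap.nonneg_iff_isPositive B).mpr hB
  exact cordes_general A B (IsSelfAdjoint.of_nonneg hA0) (IsSelfAdjoint.of_nonneg hB0)
    (fun x hx => spectrum_nonneg_of_nonneg hA0 hx)
    (fun x hx => spectrum_nonneg_of_nonneg hB0 hx) hs0 hs1
end

section
/- Let L_K be a bounded operator on L²(ρ) with singular value decomposition L_K = Σ_ℓ σ_ℓ φ_ℓ ⊗ ψ_ℓ where (φ_ℓ) and (ψ_ℓ) are orthonormal systems in L²(ρ). Define K₀ = Σ σ_ℓ φ_ℓ ⊗ φ_ℓ (as the integral operator L_{K₀}) and K₁ = Σ σ_ℓ ψ_ℓ ⊗ ψ_ℓ (as L_{K₁}). Then there exists a linear isometry U from the RKHS H_{K₁} to H_{K₀} with U ψ_ℓ = φ_ℓ for all ℓ with σ_ℓ > 0, and L_K = U L_{K₁} = L_{K₀} U, L_K* = U* L_{K₀} = L_{K₁} U*. -/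
open scoped RealInnerProductSpace

lemma aux_vanish_of_dense_span {E F : Type*}
    [NormedAddCommGroup E] [NormedSpace ℝ E]
    [NormedAddCommGroup F] [NormedSpace ℝ F]
    (T : E →L[ℝ] F) {s : Set E}
    (hs : (Submodule.span ℝ s).topologicalClosure = ⊤)
    (h : ∀ x ∈ s, T x = 0) : ∀ x, T x = 0 := by
  intro x
  have h1 : Submodule.span ℝ s ≤ LinearMap.ker (T : E →ₗ[ℝ] F) := by
    rw [Submodule.span_le]
    intro y hy
    exact LinearMap.mem_ker.mpr (h y hy)
  have h2 := (Submodule.span ℝ s).topologicalClosure_minimal h1 (ContinuousLinearMap.isClosed_ker T)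
  rw [hs] at h2
  exact LinearMap.mem_ker.mp (h2 Submodule.mem_top)

lemma aux_vanish_orth {V F : Type*}
    [NormedAddCommGroup V] [InnerProductSpace ℝ V] [CompleteSpace V]
    [NormedAddCommGroup F] [NormedSpace ℝ F]
    {ι : Type*} (v : ι → V) (T : V →L[ℝ] F)
    (h1 : ∀ i, T (v i) = 0)
    (h2 : ∀ t : V, (∀ i, ⟪v i, t⟫ = 0) → T t = 0) : ∀ x, T x = 0 := by
  intro x
  set S : Submodule ℝ V :=
    (Submodule.span ℝ (Set.range v)).topologicalClosure with hSdef

  have hsup : S ⊔ Sᗮ = ⊤ := Submodule.sup_orthogonal_of_hasOrthogonalProjection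
  have hx : x ∈ S ⊔ Sᗮ := by rw [hsup]; trivial
  rcases Submodule.mem_sup.mp hx with ⟨a, ha, b, hb, rfl⟩
  have hTa : T a = 0 := by
    have hker : Submodule.span ℝ (Set.range v) ≤ LinearMap.ker (T : V →ₗ[ℝ] F) := by
      rw [Submodule.span_le]
      rintro _ ⟨i, rfl⟩
      exact LinearMap.mem_ker.mpr (h1 i)
    have := (Submodule.span ℝ (Set.range v)).topologicalClosure_minimal hker (ContinuousLinearMap.isClosed_ker T)
    exact LinearMap.mem_ker.mp (this ha)
  have hTb : T b = 0 := by
    apply h2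
    intro i
    have hvS : v i ∈ S :=
      Submodule.le_topologicalClosure _ (Submodule.subset_span ⟨i, rfl⟩)
    exact (Submodule.mem_orthogonal S b).mp hb (v i) hvS
  rw [map_add, hTa, hTb, add_zero]

/-- Abstract form of the Kolmogorov-decomposition lemma. `V` plays the role of `L²(ρ)`;
`(φ_ℓ)`, `(ψ_ℓ)` are orthonormal systems in `V`; `σ_ℓ ≥ 0` are summable singular values;
`LK = Σ σ_ℓ φ_ℓ ⊗ ψ_ℓ`, `LK* = Σ σ_ℓ ψ_ℓ ⊗ φ_ℓ`, `LK₀ = Σ σ_ℓ φ_ℓ ⊗ φ_ℓ`,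
`LK₁ = Σ σ_ℓ ψ_ℓ ⊗ ψ_ℓ`. The RKHSs `H_{K₀}`, `H_{K₁}` are modeled by Hilbert spaces
`H0`, `H1` with injective inclusions `ι0`, `ι1` into `V` and Hilbert bases
`b0 ℓ = √σ_ℓ φ_ℓ`, `b1 ℓ = √σ_ℓ ψ_ℓ` (indexed over `σ_ℓ > 0`); `LK0'`, `LK1'` are the
lifts of `LK₀`, `LK₁` through the inclusions. Then there exists a linear isometry
`U : H_{K₁} → H_{K₀}` with `U ψ_ℓ = φ_ℓ` for `σ_ℓ > 0` (equivalently `U b1 ℓ = b0 ℓ`), and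
`L_K = U L_{K₁} = L_{K₀} U` and `L_K* = U* L_{K₀} = L_{K₁} U*`. -/
theorem kolmogorov_isometry_exists
    {V H0 H1 : Type*}
    [NormedAddCommGroup V] [InnerProductSpace ℝ V] [CompleteSpace V]
    [NormedAddCommGroup H0] [InnerProductSpace ℝ H0] [CompleteSpace H0]
    [NormedAddCommGroup H1] [InnerProductSpace ℝ H1] [CompleteSpace H1]
    (σ : ℕ → ℝ) (hσ0 : ∀ ℓ, 0 ≤ σ ℓ) (hσsum : Summable σ)
    (φ ψ : ℕ → V) (hφ : Orthonormal ℝ φ) (hψ : Orthonormal ℝ ψ)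
    (LK LKstar LK0 LK1 : V →L[ℝ] V)
    (hLK : ∀ x, LK x = ∑' ℓ : ℕ, (σ ℓ * ⟪ψ ℓ, x⟫) • φ ℓ)
    (hLKstar : ∀ x, LKstar x = ∑' ℓ : ℕ, (σ ℓ * ⟪φ ℓ, x⟫) • ψ ℓ)
    (hLK0 : ∀ x, LK0 x = ∑' ℓ : ℕ, (σ ℓ * ⟪φ ℓ, x⟫) • φ ℓ)
    (hLK1 : ∀ x, LK1 x = ∑' ℓ : ℕ, (σ ℓ * ⟪ψ ℓ, x⟫) • ψ ℓ)
    (ι0 : H0 →L[ℝ] V) (hι0inj : Function.Injective ι0)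
    (ι1 : H1 →L[ℝ] V) (hι1inj : Function.Injective ι1)
    (b0 : ℕ → H0) (b1 : ℕ → H1)
    (hb0on : Orthonormal ℝ fun ℓ : {ℓ : ℕ // 0 < σ ℓ} => b0 ℓ)
    (hb1on : Orthonormal ℝ fun ℓ : {ℓ : ℕ // 0 < σ ℓ} => b1 ℓ)
    (hb0dense : (Submodule.span ℝ
      (Set.range fun ℓ : {ℓ : ℕ // 0 < σ ℓ} => b0 ℓ)).topologicalClosure = ⊤)
    (hb1dense : (Submodule.span ℝ
      (Set.range fun ℓ : {ℓ : ℕ // 0 < σ ℓ} => b1 ℓ)).topologicalClosure = ⊤)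
    (hι0b0 : ∀ ℓ, ι0 (b0 ℓ) = Real.sqrt (σ ℓ) • φ ℓ)
    (hι1b1 : ∀ ℓ, ι1 (b1 ℓ) = Real.sqrt (σ ℓ) • ψ ℓ)
    (LK0' : V →L[ℝ] H0) (hLK0' : ∀ x, ι0 (LK0' x) = LK0 x)
    (LK1' : V →L[ℝ] H1) (hLK1' : ∀ x, ι1 (LK1' x) = LK1 x) :
    ∃ U : H1 →ₗᵢ[ℝ] H0, ∃ Ustar : H0 →ₗᵢ[ℝ] H1,
      (∀ w0 : H0, ∀ w1 : H1, ⟪Ustar w0, w1⟫ = ⟪w0, U w1⟫) ∧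
      (∀ ℓ, 0 < σ ℓ → U (b1 ℓ) = b0 ℓ) ∧
      (∀ x : V, LK x = ι0 (U (LK1' x))) ∧
      (∀ w : H1, LK (ι1 w) = LK0 (ι0 (U w))) ∧
      (∀ x : V, LKstar x = ι1 (Ustar (LK0' x))) ∧
      (∀ w : H0, LKstar (ι0 w) = LK1 (ι1 (Ustar w))) := by
  classical
  let B0 : HilbertBasis {ℓ : ℕ // 0 < σ ℓ} ℝ H0 :=
    HilbertBasis.mk hb0on (by rw [hb0dense])
  let B1 : HilbertBasis {ℓ : ℕ // 0 < σ ℓ} ℝ H1 :=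
    HilbertBasis.mk hb1on (by rw [hb1dense])
  have hB0 : ∀ i : {ℓ : ℕ // 0 < σ ℓ}, B0 i = b0 i := fun i =>
    congrFun (HilbertBasis.coe_mk _ _) i
  have hB1 : ∀ i : {ℓ : ℕ // 0 < σ ℓ}, B1 i = b1 i := fun i =>
    congrFun (HilbertBasis.coe_mk _ _) i
  let Ueq : H1 ≃ₗᵢ[ℝ] H0 := B1.repr.trans B0.repr.symm
  have hUb : ∀ i : {ℓ : ℕ // 0 < σ ℓ}, Ueq (b1 i) = b0 i := by
    intro i
    have : Ueq (B1 i) = B0 i := by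
      simp only [Ueq, LinearIsometryEquiv.trans_apply, HilbertBasis.repr_self]
      rw [← B0.repr_self i, LinearIsometryEquiv.symm_apply_apply]
    rwa [hB1, hB0] at this
  have hUsb : ∀ i : {ℓ : ℕ // 0 < σ ℓ}, Ueq.symm (b0 i) = b1 i := by
    intro i
    rw [← hUb i, Ueq.symm_apply_apply]
  -- values on the orthonormal systems
  have hLKψ : ∀ j, LK (ψ j) = σ j • φ j := by
    intro j
    rw [hLK, tsum_eq_single j (fun ℓ hne => by rw [hψ.2 hne]; simp)]
    rw [real_inner_self_eq_norm_sq, hψ.1 j]; norm_num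
  have hLK1ψ : ∀ j, LK1 (ψ j) = σ j • ψ j := by
    intro j
    rw [hLK1, tsum_eq_single j (fun ℓ hne => by rw [hψ.2 hne]; simp)]
    rw [real_inner_self_eq_norm_sq, hψ.1 j]; norm_num
  have hLK0φ : ∀ j, LK0 (φ j) = σ j • φ j := by
    intro j
    rw [hLK0, tsum_eq_single j (fun ℓ hne => by rw [hφ.2 hne]; simp)]
    rw [real_inner_self_eq_norm_sq, hφ.1 j]; norm_num
  have hLKstarφ : ∀ j, LKstar (φ j) = σ j • ψ j := by
    intro j
    rw [hLKstar, tsum_eq_single j (fun ℓ hne => by rw [hφ.2 hne]; simp)]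
    rw [real_inner_self_eq_norm_sq, hφ.1 j]; norm_num
  have hsqrt : ∀ j, Real.sqrt (σ j) * Real.sqrt (σ j) = σ j :=
    fun j => Real.mul_self_sqrt (hσ0 j)
  have hLK1'ψ : ∀ j, LK1' (ψ j) = Real.sqrt (σ j) • b1 j := by
    intro j
    apply hι1inj
    rw [hLK1', hLK1ψ, map_smul, hι1b1, smul_smul, hsqrt j]
  have hLK0'φ : ∀ j, LK0' (φ j) = Real.sqrt (σ j) • b0 j := by
    intro j
    apply hι0inj
    rw [hLK0', hLK0φ, map_smul, hι0b0, smul_smul, hsqrt j]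
  let UL : H1 →L[ℝ] H0 := Ueq.toLinearIsometry.toContinuousLinearMap
  let USL : H0 →L[ℝ] H1 := Ueq.symm.toLinearIsometry.toContinuousLinearMap
  have hUL : ∀ w, UL w = Ueq w := fun w => rfl
  have hUSL : ∀ w, USL w = Ueq.symm w := fun w => rfl
  refine ⟨Ueq.toLinearIsometry, Ueq.symm.toLinearIsometry, ?_, ?_, ?_, ?_, ?_, ?_⟩
  · intro w0 w1
    simp only [LinearIsometryEquiv.coe_toLinearIsometry]
    rw [← Ueq.inner_map_map (Ueq.symm w0) w1, Ueq.apply_symm_apply]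
  · intro ℓ hℓ
    simpa using hUb ⟨ℓ, hℓ⟩
  · -- LK = ι0 ∘ U ∘ LK1'
    intro x
    have key := aux_vanish_orth (fun i : {ℓ : ℕ // 0 < σ ℓ} => ψ i)
      (LK - ι0.comp (UL.comp LK1')) ?_ ?_ x
    · have h := sub_eq_zero.mp key
      simpa [hUL] using h
    · rintro ⟨j, hj⟩
      simp only [ContinuousLinearMap.sub_apply, ContinuousLinearMap.comp_apply]
      rw [hLKψ, hLK1'ψ j, map_smul, hUL, map_smul, hUb ⟨j, hj⟩, hι0b0, smul_smul,
        hsqrt j, sub_self]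
    · intro t ht
      have hzero : ∀ ℓ, σ ℓ * ⟪ψ ℓ, t⟫ = 0 := by
        intro ℓ
        rcases lt_or_eq_of_le (hσ0 ℓ) with h | h
        · rw [ht ⟨ℓ, h⟩, mul_zero]
        · rw [← h, zero_mul]
      have h1 : LK t = 0 := by rw [hLK]; simp [hzero]
      have h2 : LK1' t = 0 := by
        apply hι1inj
        rw [hLK1', hLK1, map_zero]
        simp [hzero]
      simp only [ContinuousLinearMap.sub_apply, ContinuousLinearMap.comp_apply]
      rw [h1, h2, map_zero, map_zero, sub_self]
  · -- LK ∘ ι1 = LK0 ∘ ι0 ∘ U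
    intro w
    have key := aux_vanish_of_dense_span
      ((LK.comp ι1) - (LK0.comp (ι0.comp UL))) hb1dense ?_ w
    · have h := sub_eq_zero.mp key
      simpa [hUL] using h
    · rintro _ ⟨⟨j, hj⟩, rfl⟩
      simp only [ContinuousLinearMap.sub_apply, ContinuousLinearMap.comp_apply]
      rw [hι1b1, map_smul, hLKψ, hUL, hUb ⟨j, hj⟩, hι0b0, map_smul, hLK0φ,
        smul_smul, sub_self]
  · -- LKstar = ι1 ∘ Ustar ∘ LK0'
    intro x
    have key := aux_vanish_orth (fun i : {ℓ : ℕ // 0 < σ ℓ} => φ i)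
      (LKstar - ι1.comp (USL.comp LK0')) ?_ ?_ x
    · have h := sub_eq_zero.mp key
      simpa [hUSL] using h
    · rintro ⟨j, hj⟩
      simp only [ContinuousLinearMap.sub_apply, ContinuousLinearMap.comp_apply]
      rw [hLKstarφ, hLK0'φ j, map_smul, hUSL, map_smul, hUsb ⟨j, hj⟩, hι1b1, smul_smul,
        hsqrt j, sub_self]
    · intro t ht
      have hzero : ∀ ℓ, σ ℓ * ⟪φ ℓ, t⟫ = 0 := by
        intro ℓ
        rcases lt_or_eq_of_le (hσ0 ℓ) with h | h
        · rw [ht ⟨ℓ, h⟩, mul_zero]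
        · rw [← h, zero_mul]
      have h1 : LKstar t = 0 := by rw [hLKstar]; simp [hzero]
      have h2 : LK0' t = 0 := by
        apply hι0inj
        rw [hLK0', hLK0, map_zero]
        simp [hzero]
      simp only [ContinuousLinearMap.sub_apply, ContinuousLinearMap.comp_apply]
      rw [h1, h2, map_zero, map_zero, sub_self]
  · -- LKstar ∘ ι0 = LK1 ∘ ι1 ∘ Ustar
    intro w
    have key := aux_vanish_of_dense_span
      ((LKstar.comp ι0) - (LK1.comp (ι1.comp USL))) hb0dense ?_ w
    · have h := sub_eq_zero.mp key
      simpa [hUSL] using h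
    · rintro _ ⟨⟨j, hj⟩, rfl⟩
      simp only [ContinuousLinearMap.sub_apply, ContinuousLinearMap.comp_apply]
      rw [hι0b0, map_smul, hLKstarφ, hUSL, hUsb ⟨j, hj⟩, hι1b1, map_smul, hLK1ψ,
        smul_smul, sub_self]
end
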